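/- arXiv:2308.07591 — 4 statements merged into one kernel-verified Lean document; each statement's English description precedes it below -/
import Mathlib

section
/- Let f* be the unique fixed point of the operator f(x) = min_u ( c(x,u) + ∫ f(y) T(dy|x,u) − ∫ f(y) μ(dy) ) under the minorization condition. Then setting j := ∫ f*(y) μ(dy), the pair (j, f*) satisfies the average cost optimality equation j + f*(x) = min_u ( c(x,u) + ∫ f*(y) T(dy|x,u) ) for all x. -/
open MeasureTheory

lemma ciInf_sub_const {ι : Type*} [Fintype ι] [Nonempty ι] (f : ι → ℝ) (a : ℝ) :
    ⨅ i, (f i - a) = (⨅ i, f i) - a := by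
  apply le_antisymm
  · obtain ⟨i0, hi0⟩ := exists_eq_ciInf_of_finite (f := f)
    calc ⨅ i, (f i - a) ≤ f i0 - a := ciInf_le (Set.Finite.bddBelow (Set.finite_range _)) i0
    _ = (⨅ i, f i) - a := by rw [hi0]
  · exact le_ciInf fun i => sub_le_sub_right
      (ciInf_le (Set.Finite.bddBelow (Set.finite_range _)) i) a

/-- If `f*` is the fixed point of the modified Bellman operator with kernel `T − μ`,
then with `j = ∫ f* dμ`, the pair `(j, f*)` satisfies the average cost optimality
equation `j + f*(x) = min_u (c(x,u) + ∫ f* dT(·|x,u))`. -/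
theorem stmt2 {X U : Type*} [MeasurableSpace X] [Fintype U] [Nonempty U]
    (T : X → U → Measure X) (hT : ∀ x u, IsProbabilityMeasure (T x u))
    (μ : Measure X) (hpos : 0 < μ Set.univ) (hlt : μ Set.univ < 1)
    (hmin : ∀ (x : X) (u : U) (B : Set X), MeasurableSet B → μ B ≤ T x u B)
    (c : X → U → ℝ) (hcb : ∃ C, ∀ x u, |c x u| ≤ C)
    (fstar : X → ℝ) (hfmeas : Measurable fstar) (hfb : ∃ C, ∀ x, |fstar x| ≤ C)
    (hfix : ∀ x, fstar x = ⨅ u, (c x u + ∫ y, fstar y ∂(T x u) - ∫ y, fstar y ∂μ)) :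
    ∀ x, (∫ y, fstar y ∂μ) + fstar x = ⨅ u, (c x u + ∫ y, fstar y ∂(T x u)) := by
  intro x
  rw [hfix x, ciInf_sub_const (fun u => c x u + ∫ y, fstar y ∂(T x u)) (∫ y, fstar y ∂μ)]
  ring
end

section
/- Under the uniform total variation bound ‖T(·|x,u) − T(·|x',u')‖_TV ≤ 2α with α < 1, the operator (Th)(x) = min_u ( c(x,u) + ∫ h(y) T(dy|x,u) ) on bounded measurable functions is a contraction with constant α with respect to the span seminorm ‖h‖_sp = sup h − inf h. -/
open MeasureTheory Set

lemma bdd_integrable {X : Type*} [MeasurableSpace X] (μ : Measure X)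
    [IsProbabilityMeasure μ] {f : X → ℝ} (hf : Measurable f) {C : ℝ}
    (hfb : ∀ x, |f x| ≤ C) : Integrable f μ :=
  (integrable_const C).mono' hf.aestronglyMeasurable (Filter.Eventually.of_forall hfb)

lemma key_tv {X : Type*} [MeasurableSpace X] [Nonempty X]
    (μ ν : Measure X) [IsProbabilityMeasure μ] [IsProbabilityMeasure ν]
    (α : ℝ)
    (hTV : ∀ B : Set X, MeasurableSet B → |(μ B).toReal - (ν B).toReal| ≤ α)
    (f : X → ℝ) (hf : Measurable f) (C : ℝ) (hfb : ∀ x, |f x| ≤ C) :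
    ∫ y, f y ∂μ - ∫ y, f y ∂ν ≤ α * ((⨆ x, f x) - ⨅ x, f x) := by
  have hbdd : BddAbove (Set.range f) := ⟨C, by rintro _ ⟨x, rfl⟩; exact (abs_le.mp (hfb x)).2⟩
  have hbdd' : BddBelow (Set.range f) := ⟨-C, by rintro _ ⟨x, rfl⟩; exact (abs_le.mp (hfb x)).1⟩
  set i : ℝ := ⨅ x, f x with hi
  set s : ℝ := ⨆ x, f x with hs
  have hle : ∀ x, i ≤ f x := fun x => ciInf_le hbdd' x
  have hge : ∀ x, f x ≤ s := fun x => le_ciSup hbdd x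
  set M : ℝ := s - i with hM
  have hM0 : 0 ≤ M := by
    obtain ⟨x⟩ := ‹Nonempty X›
    have := hle x; have := hge x; simp only [hM]; linarith
  set ft : X → ℝ := fun x => f x - i with hft
  have hftm : Measurable ft := hf.sub measurable_const
  have hftb : ∀ x, |ft x| ≤ C + |i| := by
    intro x
    calc |ft x| ≤ |f x| + |i| := abs_sub _ _
    _ ≤ C + |i| := by linarith [hfb x]
  have hint : ∀ (ρ : Measure X) [IsProbabilityMeasure ρ], Integrable ft ρ :=
    fun ρ _ => bdd_integrable ρ hftm hftb
  have hnn : ∀ x, 0 ≤ ft x := fun x => sub_nonneg.mpr (hle x)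
  have hub : ∀ x, ft x ≤ M := fun x => sub_le_sub_right (hge x) i
  -- layer cake
  have lc : ∀ (ρ : Measure X) [IsProbabilityMeasure ρ],
      ∫ y, ft y ∂ρ = ∫ t in Ioi (0:ℝ), (ρ {a | t < ft a}).toReal := fun ρ _ =>
    (hint ρ).integral_eq_integral_meas_lt (Filter.Eventually.of_forall hnn)
  set G : ℝ → ℝ := fun t => (μ {a | t < ft a}).toReal with hG
  set H : ℝ → ℝ := fun t => (ν {a | t < ft a}).toReal with hH
  have hmeas : ∀ t : ℝ, MeasurableSet {a | t < ft a} := fun t =>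
    measurableSet_lt measurable_const hftm
  have hzero : ∀ (ρ : Measure X) (t : ℝ), M ≤ t → ρ {a | t < ft a} = 0 := by
    intro ρ t ht
    convert measure_empty
    · ext a; simp only [mem_setOf_eq, mem_empty_iff_false, iff_false, not_lt]
      exact (hub a).trans ht
    · infer_instance
  have hGbd : ∀ (ρ : Measure X) [IsProbabilityMeasure ρ], ∀ t ∈ Ioi (0:ℝ),
      |(ρ {a | t < ft a}).toReal| ≤ (Ioc (0:ℝ) M).indicator (fun _ => (1:ℝ)) t := by
    intro ρ _ t ht
    rw [abs_of_nonneg ENNReal.toReal_nonneg]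
    by_cases htM : t ≤ M
    · rw [indicator_of_mem (Set.mem_Ioc.mpr ⟨ht, htM⟩)]
      exact ENNReal.toReal_le_of_le_ofReal zero_le_one (by simpa using prob_le_one)
    · rw [hzero ρ t (le_of_not_ge htM)]
      simp [indicator_nonneg]
  have hindint : Integrable ((Ioc (0:ℝ) M).indicator (fun _ => (1:ℝ)))
      (volume.restrict (Ioi (0:ℝ))) := by
    apply Integrable.restrict
    rw [integrable_indicator_iff measurableSet_Ioc]
    exact integrableOn_const measure_Ioc_lt_top.ne
  have hGint : ∀ (ρ : Measure X) [IsProbabilityMeasure ρ],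
      Integrable (fun t => (ρ {a | t < ft a}).toReal) (volume.restrict (Ioi (0:ℝ))) := by
    intro ρ _
    refine hindint.mono' ?_ ?_
    · exact Measurable.aestronglyMeasurable <| by
        apply Antitone.measurable
        intro t₁ t₂ h12
        exact ENNReal.toReal_mono (measure_ne_top ρ _)
          (measure_mono (fun a ha => lt_of_le_of_lt h12 ha))
    · exact (ae_restrict_iff' measurableSet_Ioi).mpr
        (Filter.Eventually.of_forall (hGbd ρ))
  have key : ∫ t in Ioi (0:ℝ), (G t - H t) ≤ α * M := by
    have hbound : ∀ t ∈ Ioi (0:ℝ), G t - H t ≤ (Ioc (0:ℝ) M).indicator (fun _ => α) t := by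
      intro t ht
      by_cases htM : t ≤ M
      · rw [indicator_of_mem (Set.mem_Ioc.mpr ⟨ht, htM⟩)]
        exact (le_abs_self _).trans (hTV _ (hmeas t))
      · rw [indicator_of_notMem (fun hmem => htM (Set.mem_Ioc.mp hmem).2)]
        simp only [G, H, hzero μ t (le_of_not_ge htM), hzero ν t (le_of_not_ge htM),
          ENNReal.toReal_zero, sub_zero, le_refl]
    have hindint' : Integrable ((Ioc (0:ℝ) M).indicator (fun _ => α))
        (volume.restrict (Ioi (0:ℝ))) := by
      apply Integrable.restrict
      rw [integrable_indicator_iff measurableSet_Ioc]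
      exact integrableOn_const measure_Ioc_lt_top.ne
    calc ∫ t in Ioi (0:ℝ), (G t - H t)
        ≤ ∫ t in Ioi (0:ℝ), (Ioc (0:ℝ) M).indicator (fun _ => α) t := by
          apply setIntegral_mono_on ((hGint μ).sub (hGint ν)) hindint' measurableSet_Ioi
          exact hbound
      _ = ∫ t in Ioc (0:ℝ) M, α := by
          rw [integral_indicator measurableSet_Ioc, Measure.restrict_restrict measurableSet_Ioc,
            inter_eq_left.mpr Ioc_subset_Ioi_self]
      _ = α * M := by
          rw [setIntegral_const, Real.volume_real_Ioc_of_le hM0, smul_eq_mul]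
          rw [sub_zero, mul_comm]
  have hsplit : ∫ y, f y ∂μ - ∫ y, f y ∂ν = ∫ t in Ioi (0:ℝ), (G t - H t) := by
    have e1 : ∫ y, ft y ∂μ = ∫ y, f y ∂μ - i := by
      rw [hft]; rw [integral_sub (bdd_integrable μ hf hfb) (integrable_const i)]
      simp
    have e2 : ∫ y, ft y ∂ν = ∫ y, f y ∂ν - i := by
      rw [hft]; rw [integral_sub (bdd_integrable ν hf hfb) (integrable_const i)]
      simp
    rw [integral_sub (hGint μ) (hGint ν), ← lc μ, ← lc ν, e1, e2]
    ring
  rw [hsplit]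
  exact key

/-- Under the uniform total variation (Dobrushin) bound with coefficient `α < 1`, the
Bellman operator `(Th)(x) = min_u (c(x,u) + ∫ h dT(·|x,u))` is a contraction with
constant `α` in the span seminorm. -/
theorem stmt4 {X U : Type*} [MeasurableSpace X] [Nonempty X] [Fintype U] [Nonempty U]
    (T : X → U → Measure X) (hT : ∀ x u, IsProbabilityMeasure (T x u))
    (α : ℝ) (hα0 : 0 ≤ α) (hα1 : α < 1)
    (hTV : ∀ (x : X) (u : U) (x' : X) (u' : U) (B : Set X), MeasurableSet B →
      |(T x u B).toReal - (T x' u' B).toReal| ≤ α)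
    (c : X → U → ℝ) (hc_meas : ∀ u, Measurable (fun x => c x u))
    (hc_bdd : ∃ C, ∀ x u, |c x u| ≤ C)
    (h g : X → ℝ) (hh : Measurable h) (hg : Measurable g)
    (hhb : ∃ C, ∀ x, |h x| ≤ C) (hgb : ∃ C, ∀ x, |g x| ≤ C) :
    (⨆ x, ((⨅ u, (c x u + ∫ y, h y ∂(T x u))) - (⨅ u, (c x u + ∫ y, g y ∂(T x u))))) -
    (⨅ x, ((⨅ u, (c x u + ∫ y, h y ∂(T x u))) - (⨅ u, (c x u + ∫ y, g y ∂(T x u))))) ≤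
      α * ((⨆ x, (h x - g x)) - (⨅ x, (h x - g x))) := by
  obtain ⟨Ch, hCh⟩ := hhb
  obtain ⟨Cg, hCg⟩ := hgb
  set f : X → ℝ := fun x => h x - g x with hfdef
  have hfm : Measurable f := hh.sub hg
  have hfb : ∀ x, |f x| ≤ Ch + Cg := fun x =>
    (abs_sub _ _).trans (add_le_add (hCh x) (hCg x))
  set A : X → ℝ := fun x => ⨅ u, (c x u + ∫ y, h y ∂(T x u)) with hA
  set B : X → ℝ := fun x => ⨅ u, (c x u + ∫ y, g y ∂(T x u)) with hB
  set K : ℝ := α * ((⨆ x, f x) - ⨅ x, f x) with hK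
  have step : ∀ x x' : X, (A x - B x) - (A x' - B x') ≤ K := by
    intro x x'
    obtain ⟨u₂, hu₂⟩ : ∃ u, c x u + ∫ y, g y ∂(T x u) = B x := exists_eq_ciInf_of_finite
    obtain ⟨u₁, hu₁⟩ : ∃ u, c x' u + ∫ y, h y ∂(T x' u) = A x' := exists_eq_ciInf_of_finite
    have hAx : A x ≤ c x u₂ + ∫ y, h y ∂(T x u₂) :=
      ciInf_le (Finite.bddBelow_range _) u₂
    have hBx' : B x' ≤ c x' u₁ + ∫ y, g y ∂(T x' u₁) :=
      ciInf_le (Finite.bddBelow_range _) u₁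
    have hμ := hT x u₂
    have hν := hT x' u₁
    have hsub : ∀ (xx : X) (uu : U),
        ∫ y, f y ∂(T xx uu) = (∫ y, h y ∂(T xx uu)) - ∫ y, g y ∂(T xx uu) := by
      intro xx uu
      have := hT xx uu
      exact integral_sub (bdd_integrable _ hh hCh) (bdd_integrable _ hg hCg)
    have hkey : ∫ y, f y ∂(T x u₂) - ∫ y, f y ∂(T x' u₁) ≤ K :=
      key_tv (T x u₂) (T x' u₁) α (fun Bs hBs => hTV x u₂ x' u₁ Bs hBs) f hfm
        (Ch + Cg) hfb
    have e1 : A x - B x ≤ ∫ y, f y ∂(T x u₂) := by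
      rw [hsub x u₂]; rw [← hu₂] at *; linarith
    have e2 : -(A x' - B x') ≤ -∫ y, f y ∂(T x' u₁) := by
      rw [hsub x' u₁]; rw [← hu₁] at *; linarith
    linarith
  have main : (⨆ x, (A x - B x)) ≤ (⨅ x, (A x - B x)) + K := by
    apply ciSup_le
    intro x
    have h1 : (A x - B x) - K ≤ ⨅ x', (A x' - B x') :=
      le_ciInf (fun x' => by linarith [step x x'])
    linarith
  linarith
end

section
/- Define iteratively h_{t+1}(x) = min_u ( c(x,u) + ∫ h_t(y) T(dy|x,u) − ∫ h_t(y) μ(dy) ) with h_0 ≡ 0, where c is K_c-Lipschitz in x and T is K_f-Lipschitz in x under W₁. Then each h_t is Lipschitz with constant at most Σ_{k=0}^{t} K_c K_f^k; in particular if K_f < 1 the limit fixed point h* satisfies Lip(h*) ≤ K_c/(1 − K_f). -/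
open MeasureTheory Filter Topology

private lemma inf_abs_bound {U : Type*} [Fintype U] [Nonempty U]
    (f g : U → ℝ) (B : ℝ) (hfg : ∀ u, |f u - g u| ≤ B) :
    |(⨅ u, f u) - ⨅ u, g u| ≤ B := by
  have bf : BddBelow (Set.range f) := Set.Finite.bddBelow (Set.finite_range f)
  have bg : BddBelow (Set.range g) := Set.Finite.bddBelow (Set.finite_range g)
  rw [abs_sub_le_iff]
  constructor
  · have h1 : (⨅ u, f u) - B ≤ ⨅ u, g u := by
      apply le_ciInf
      intro u
      have h2 := ciInf_le bf u
      have h3 := abs_sub_le_iff.mp (hfg u)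
      linarith [h3.1]
    linarith
  · have h1 : (⨅ u, g u) - B ≤ ⨅ u, f u := by
      apply le_ciInf
      intro u
      have h2 := ciInf_le bg u
      have h3 := abs_sub_le_iff.mp (hfg u)
      linarith [h3.2]
    linarith

/-- The relative value iterates `h_{t+1}(x) = min_u (c(x,u) + ∫ h_t dT(·|x,u) − ∫ h_t dμ)`
(with `h_0 ≡ 0`) are Lipschitz with constant `Σ_{k=0}^{t} K_c K_f^k`; consequently any
pointwise limit `h*` is Lipschitz with constant `K_c/(1 − K_f)` when `K_f < 1`. -/
theorem stmt10 {X U : Type*} [MetricSpace X] [MeasurableSpace X] [BorelSpace X]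
    [Fintype U] [Nonempty U]
    (T : X → U → Measure X) (hT : ∀ x u, IsProbabilityMeasure (T x u))
    (μ : Measure X) (hpos : 0 < μ Set.univ) (hlt : μ Set.univ < 1)
    (hmin : ∀ (x : X) (u : U) (Bs : Set X), MeasurableSet Bs → μ Bs ≤ T x u Bs)
    (c : X → U → ℝ) (hcb : ∃ C, ∀ x u, |c x u| ≤ C)
    (Kc Kf : ℝ) (hKc : 0 ≤ Kc) (hKf : 0 ≤ Kf) (hKf1 : Kf < 1)
    (hclip : ∀ (x x' : X) (u : U), |c x u - c x' u| ≤ Kc * dist x x')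
    (hTlip : ∀ (g : X → ℝ), LipschitzWith 1 g → ∀ (x x' : X) (u : U),
      |(∫ y, g y ∂(T x u)) - ∫ y, g y ∂(T x' u)| ≤ Kf * dist x x')
    (h : ℕ → X → ℝ) (h0 : ∀ x, h 0 x = 0)
    (hrec : ∀ t x, h (t + 1) x =
      ⨅ u, (c x u + ∫ y, h t y ∂(T x u) - ∫ y, h t y ∂μ)) :
    (∀ t (x x' : X), |h t x - h t x'| ≤
        (∑ k ∈ Finset.range (t + 1), Kc * Kf ^ k) * dist x x') ∧
    (∀ hstar : X → ℝ, (∀ x, Tendsto (fun t => h t x) atTop (𝓝 (hstar x))) →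
      ∀ x x', |hstar x - hstar x'| ≤ (Kc / (1 - Kf)) * dist x x') := by
  have key : ∀ t (x x' : X), |h t x - h t x'| ≤
      (∑ k ∈ Finset.range (t + 1), Kc * Kf ^ k) * dist x x' := by
    intro t
    induction t with
    | zero =>
      intro x x'
      simp only [h0, sub_self, abs_zero, Finset.range_one, Finset.sum_singleton, pow_zero,
        mul_one]
      positivity
    | succ t ih =>
      intro x x'
      set L : ℝ := ∑ k ∈ Finset.range (t + 1), Kc * Kf ^ k with hLdef
      have hL0 : 0 ≤ L := by
        apply Finset.sum_nonneg
        intro k _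
        positivity
      -- bound for the integral terms
      have hint : ∀ u, |(∫ y, h t y ∂(T x u)) - ∫ y, h t y ∂(T x' u)| ≤
          Kf * L * dist x x' := by
        intro u
        rcases eq_or_lt_of_le hL0 with hLeq | hLpos
        · -- L = 0 : h t is constant
          have hconst : ∀ y : X, h t y = h t x := by
            intro y
            have := ih y x
            rw [← hLeq] at this
            simp only [zero_mul] at this
            have := abs_nonpos_iff.mp this
            linarith
          have heq : ∀ z u', (∫ y, h t y ∂(T z u')) = h t x := by
            intro z u'
            have : (fun y => h t y) = fun _ => h t x := funext hconst
            rw [this]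
            haveI := hT z u'
            simp [integral_const]
          rw [heq, heq, sub_self, abs_zero, ← hLeq]
          simp
        · -- L > 0 : rescale to a 1-Lipschitz function
          set g : X → ℝ := fun y => h t y / L with hgdef
          have hg : LipschitzWith 1 g := by
            apply LipschitzWith.of_dist_le_mul
            intro a b
            simp only [hgdef, Real.dist_eq, NNReal.coe_one, one_mul, div_sub_div_same]
            rw [abs_div, abs_of_pos hLpos, div_le_iff₀ hLpos]
            calc |h t a - h t b| ≤ L * dist a b := ih a b
              _ = dist a b * L := mul_comm _ _
          have hscale : ∀ z u', (∫ y, h t y ∂(T z u')) = L * ∫ y, g y ∂(T z u') := by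
            intro z u'
            have heq : (fun y => h t y) = fun y => L • g y := by
              funext y
              simp only [hgdef, smul_eq_mul]
              field_simp
            rw [heq, integral_smul, smul_eq_mul]
          rw [hscale x u, hscale x' u, ← mul_sub, abs_mul, abs_of_pos hLpos]
          have := hTlip g hg x x' u
          calc L * |(∫ y, g y ∂(T x u)) - ∫ y, g y ∂(T x' u)| ≤ L * (Kf * dist x x') := by
                exact mul_le_mul_of_nonneg_left this hL0
            _ = Kf * L * dist x x' := by ring
      -- per-action bound
      have hu : ∀ u, |(c x u + ∫ y, h t y ∂(T x u) - ∫ y, h t y ∂μ) -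
          (c x' u + ∫ y, h t y ∂(T x' u) - ∫ y, h t y ∂μ)| ≤
          (Kc + Kf * L) * dist x x' := by
        intro u
        have h1 := hclip x x' u
        have h2 := hint u
        calc |(c x u + ∫ y, h t y ∂(T x u) - ∫ y, h t y ∂μ) -
            (c x' u + ∫ y, h t y ∂(T x' u) - ∫ y, h t y ∂μ)|
            = |(c x u - c x' u) + ((∫ y, h t y ∂(T x u)) - ∫ y, h t y ∂(T x' u))| := by
              ring_nf
          _ ≤ |c x u - c x' u| + |(∫ y, h t y ∂(T x u)) - ∫ y, h t y ∂(T x' u)| :=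
              abs_add_le _ _
          _ ≤ Kc * dist x x' + Kf * L * dist x x' := add_le_add h1 h2
          _ = (Kc + Kf * L) * dist x x' := by ring
      rw [hrec t x, hrec t x']
      have hbound := inf_abs_bound
        (fun u => c x u + ∫ y, h t y ∂(T x u) - ∫ y, h t y ∂μ)
        (fun u => c x' u + ∫ y, h t y ∂(T x' u) - ∫ y, h t y ∂μ)
        ((Kc + Kf * L) * dist x x') hu
      refine hbound.trans (le_of_eq ?_)
      have hsum : ∑ k ∈ Finset.range (t + 1 + 1), Kc * Kf ^ k = Kc + Kf * L := by
        rw [Finset.sum_range_succ', hLdef, Finset.mul_sum]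
        simp only [pow_zero, mul_one, pow_succ]
        rw [add_comm]
        congr 1
        apply Finset.sum_congr rfl
        intro k _
        ring
      rw [hsum]
  refine ⟨key, ?_⟩
  intro hstar hconv x x'
  have hsum_le : ∀ t, (∑ k ∈ Finset.range (t + 1), Kc * Kf ^ k) ≤ Kc / (1 - Kf) := by
    intro t
    have h1 : (0:ℝ) < 1 - Kf := by linarith
    have h2 : ∑ k ∈ Finset.range (t + 1), Kf ^ k ≤ 1 / (1 - Kf) := by
      rw [geom_sum_eq (by linarith : Kf ≠ 1)]
      have heq : (Kf ^ (t + 1) - 1) / (Kf - 1) = (1 - Kf ^ (t + 1)) / (1 - Kf) := by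
        rw [← neg_div_neg_eq]; ring_nf
      rw [heq, div_le_div_iff₀ h1 h1]
      nlinarith [pow_nonneg hKf (t + 1)]
    calc ∑ k ∈ Finset.range (t + 1), Kc * Kf ^ k
        = Kc * ∑ k ∈ Finset.range (t + 1), Kf ^ k := by rw [Finset.mul_sum]
      _ ≤ Kc * (1 / (1 - Kf)) := mul_le_mul_of_nonneg_left h2 hKc
      _ = Kc / (1 - Kf) := by ring
  have htend : Tendsto (fun t => |h t x - h t x'|) atTop (𝓝 |hstar x - hstar x'|) :=
    ((hconv x).sub (hconv x')).abs
  apply le_of_tendsto htend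
  filter_upwards with t
  exact (key t x x').trans (mul_le_mul_of_nonneg_right (hsum_le t) dist_nonneg)
end

section
/- Let F be an operator on functions Q : Y × U → ℝ of the form (FQ)(y,u) = C*(y,u) + Σ_z P*(z|y,u) min_v Q(z,v), where the finite-state kernel P* satisfies the minorization P*(·|y,u) ≥ μ'(·) with μ'(Y) = δ|Y| > 0. Then F is a contraction with constant 1 − δ|Y| with respect to the span seminorm: ‖FQ − FQ'‖_sp ≤ (1 − δ|Y|) ‖Q − Q'‖_sp. -/
/-- The finite-state Q-Bellman operator
`(FQ)(y,u) = C*(y,u) + Σ_z P*(z|y,u) min_v Q(z,v)` with a kernel minorized by the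
uniform measure of mass `δ` per state is a contraction with constant `1 − δ|Y|` in the
span seminorm. -/
theorem stmt17 {Y U : Type*} [Fintype Y] [Fintype U] [Nonempty Y] [Nonempty U]
    (Cst : Y → U → ℝ) (P : Y → U → Y → ℝ) (δ : ℝ) (hδ : 0 < δ)
    (hP : ∀ y u z, δ ≤ P y u z) (hsum : ∀ y u, ∑ z, P y u z = 1)
    (Q Q' : Y → U → ℝ) :
    (⨆ p : Y × U,
      ((Cst p.1 p.2 + ∑ z, P p.1 p.2 z * ⨅ v, Q z v) -
       (Cst p.1 p.2 + ∑ z, P p.1 p.2 z * ⨅ v, Q' z v))) -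
    (⨅ p : Y × U,
      ((Cst p.1 p.2 + ∑ z, P p.1 p.2 z * ⨅ v, Q z v) -
       (Cst p.1 p.2 + ∑ z, P p.1 p.2 z * ⨅ v, Q' z v))) ≤
    (1 - δ * Fintype.card Y) *
      ((⨆ p : Y × U, (Q p.1 p.2 - Q' p.1 p.2)) -
       (⨅ p : Y × U, (Q p.1 p.2 - Q' p.1 p.2))) := by
  set M : ℝ := ⨆ p : Y × U, (Q p.1 p.2 - Q' p.1 p.2) with hM
  set m : ℝ := ⨅ p : Y × U, (Q p.1 p.2 - Q' p.1 p.2) with hm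
  set g : Y → ℝ := fun z => (⨅ v, Q z v) - (⨅ v, Q' z v) with hg
  have hgM : ∀ z, g z ≤ M := by
    intro z
    obtain ⟨v₀, hv₀⟩ := Finite.exists_min (fun v => Q' z v)
    have h1 : (⨅ v, Q z v) ≤ Q z v₀ :=
      ciInf_le (Set.Finite.bddBelow (Set.finite_range _)) v₀
    have h2 : Q' z v₀ ≤ ⨅ v, Q' z v := le_ciInf hv₀
    have h3 : Q z v₀ - Q' z v₀ ≤ M :=
      le_ciSup (f := fun p : Y × U => Q p.1 p.2 - Q' p.1 p.2)
        (Set.Finite.bddAbove (Set.finite_range _)) (⟨z, v₀⟩ : Y × U)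
    simp only [hg]
    linarith
  have hgm : ∀ z, m ≤ g z := by
    intro z
    obtain ⟨v₀, hv₀⟩ := Finite.exists_min (fun v => Q z v)
    have h1 : (⨅ v, Q' z v) ≤ Q' z v₀ :=
      ciInf_le (Set.Finite.bddBelow (Set.finite_range _)) v₀
    have h2 : Q z v₀ ≤ ⨅ v, Q z v := le_ciInf hv₀
    have h3 : m ≤ Q z v₀ - Q' z v₀ :=
      ciInf_le (f := fun p : Y × U => Q p.1 p.2 - Q' p.1 p.2)
        (Set.Finite.bddBelow (Set.finite_range _)) (⟨z, v₀⟩ : Y × U)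
    simp only [hg]
    linarith
  have hD : ∀ p : Y × U,
      ((Cst p.1 p.2 + ∑ z, P p.1 p.2 z * ⨅ v, Q z v) -
       (Cst p.1 p.2 + ∑ z, P p.1 p.2 z * ⨅ v, Q' z v)) = ∑ z, P p.1 p.2 z * g z := by
    intro p
    simp only [hg, mul_sub]
    rw [Finset.sum_sub_distrib]
    ring
  have hcard : δ * (Fintype.card Y : ℝ) ≤ 1 := by
    have := hsum (Classical.arbitrary Y) (Classical.arbitrary U)
    calc δ * (Fintype.card Y : ℝ) = ∑ _z : Y, δ := by
          simp [mul_comm]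
      _ ≤ ∑ z, P (Classical.arbitrary Y) (Classical.arbitrary U) z :=
          Finset.sum_le_sum fun z _ => hP _ _ z
      _ = 1 := this
  have key : ∀ p : Y × U, ∀ q : Y × U,
      (∑ z, P p.1 p.2 z * g z) - (∑ z, P q.1 q.2 z * g z)
        ≤ (1 - δ * Fintype.card Y) * (M - m) := by
    intro p q
    have hup : ∑ z, P p.1 p.2 z * g z ≤ δ * (∑ z, g z) + (1 - δ * Fintype.card Y) * M := by
      have : ∀ z ∈ Finset.univ, P p.1 p.2 z * g z ≤ δ * g z + (P p.1 p.2 z - δ) * M := by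
        intro z _
        have h1 : (P p.1 p.2 z - δ) * g z ≤ (P p.1 p.2 z - δ) * M :=
          mul_le_mul_of_nonneg_left (hgM z) (by linarith [hP p.1 p.2 z])
        nlinarith
      calc ∑ z, P p.1 p.2 z * g z ≤ ∑ z, (δ * g z + (P p.1 p.2 z - δ) * M) :=
            Finset.sum_le_sum this
        _ = δ * (∑ z, g z) + (1 - δ * Fintype.card Y) * M := by
            have hPs : ∑ z, (P p.1 p.2 z - δ) = 1 - δ * Fintype.card Y := by
              rw [Finset.sum_sub_distrib, hsum]; simp [mul_comm]
            rw [Finset.sum_add_distrib, ← Finset.mul_sum, ← Finset.sum_mul, hPs]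
    have hlow : δ * (∑ z, g z) + (1 - δ * Fintype.card Y) * m ≤ ∑ z, P q.1 q.2 z * g z := by
      have : ∀ z ∈ Finset.univ, δ * g z + (P q.1 q.2 z - δ) * m ≤ P q.1 q.2 z * g z := by
        intro z _
        have h1 : (P q.1 q.2 z - δ) * m ≤ (P q.1 q.2 z - δ) * g z :=
          mul_le_mul_of_nonneg_left (hgm z) (by linarith [hP q.1 q.2 z])
        nlinarith
      calc δ * (∑ z, g z) + (1 - δ * Fintype.card Y) * m
            = ∑ z, (δ * g z + (P q.1 q.2 z - δ) * m) := by
            have hPs : ∑ z, (P q.1 q.2 z - δ) = 1 - δ * Fintype.card Y := by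
              rw [Finset.sum_sub_distrib, hsum]; simp [mul_comm]
            rw [Finset.sum_add_distrib, ← Finset.mul_sum, ← Finset.sum_mul, hPs]
        _ ≤ ∑ z, P q.1 q.2 z * g z := Finset.sum_le_sum this
    linarith
  have hsup : (⨆ p : Y × U,
      ((Cst p.1 p.2 + ∑ z, P p.1 p.2 z * ⨅ v, Q z v) -
       (Cst p.1 p.2 + ∑ z, P p.1 p.2 z * ⨅ v, Q' z v)))
      ≤ (⨅ p : Y × U,
      ((Cst p.1 p.2 + ∑ z, P p.1 p.2 z * ⨅ v, Q z v) -
       (Cst p.1 p.2 + ∑ z, P p.1 p.2 z * ⨅ v, Q' z v)))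
      + (1 - δ * Fintype.card Y) * (M - m) := by
    apply ciSup_le
    intro p
    have h : ((Cst p.1 p.2 + ∑ z, P p.1 p.2 z * ⨅ v, Q z v) -
        (Cst p.1 p.2 + ∑ z, P p.1 p.2 z * ⨅ v, Q' z v)) -
        (1 - δ * Fintype.card Y) * (M - m) ≤ (⨅ p : Y × U,
        ((Cst p.1 p.2 + ∑ z, P p.1 p.2 z * ⨅ v, Q z v) -
        (Cst p.1 p.2 + ∑ z, P p.1 p.2 z * ⨅ v, Q' z v))) := by
      apply le_ciInf
      intro q
      rw [hD p, hD q]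
      linarith [key p q]
    linarith
  linarith
end
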